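/- arXiv:1907.01105 — 5 statements merged into one kernel-verified Lean document; each statement's English description precedes it below -/
import Mathlib

section
/- Semi-discrete energy conservation on a periodic grid (Lemma 1, matrix form). Let n̂, n₁, n₂ be positive integers. Let Ĥ, Ĵ be positive diagonal n̂×n̂ real matrices, H₁, J₁ positive diagonal n₁×n₁ real matrices, and H₂, J₂ positive diagonal n₂×n₂ real matrices. Let D₁ ∈ ℝ^{n₁×n̂}, D₂ ∈ ℝ^{n₂×n̂}, D̂₁ ∈ ℝ^{n̂×n₁}, D̂₂ ∈ ℝ^{n̂×n₂} satisfy the periodic SBP relations Ĥ·D̂₁ = −D₁ᵀ·H₁ and Ĥ·D̂₂ = −D₂ᵀ·H₂. Set H = blockdiag(H₁, H₂) and J = blockdiag(J₁, J₂), and let G be an invertible (n₁+n₂)×(n₁+n₂) real matrix such that H·J·G⁻¹ is symmetric. Suppose p : ℝ → ℝ^{n̂}, v¹ : ℝ → ℝ^{n₁}, v² : ℝ → ℝ^{n₂} are differentiable and satisfy, for all t, Ĵ·p′(t) = −(D̂₁·J₁·v¹(t) + D̂₂·J₂·v²(t)) and the stacked vector (v¹, v²)′(t) = −G·(D₁·p(t),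 D₂·p(t)). Then the discrete energy E(t) = ½·p(t)ᵀ·Ĥ·Ĵ·p(t) + ½·(v¹(t), v²(t))ᵀ·H·J·G⁻¹·(v¹(t), v²(t)) has derivative zero for every t; in particular E is constant. -/
/-!
Differentiating the energy, the symmetric forms `Ĥ Ĵ` and `H J G⁻¹` reduce `E'` to
`p ⬝ Ĥ Ĵ p' + w ⬝ H J G⁻¹ w'` with `w = (v¹, v²)`. Inserting the equations of motion, the SBP
relations move the difference operators from `p` onto `v` and turn the first term into
`u ⬝ H J w` with `u = (D₁ p, D₂ p)`, while `G⁻¹ G = 1` turns the second into `-(w ⬝ H J u)`.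
These cancel because `H J` is diagonal.
-/

open Matrix

namespace Matrix

variable {l m n : Type*} [Fintype m] [Fintype n]

theorem IsSymm.dotProduct_mulVec_comm {A : Matrix n n ℝ} (hA : A.IsSymm) (x y : n → ℝ) :
    x ⬝ᵥ A *ᵥ y = y ⬝ᵥ A *ᵥ x := by
  conv_lhs => rw [← hA.eq]
  exact dotProduct_transpose_mulVec A x y

theorem dotProduct_mulVec_mulVec_of_mul_eq_neg_transpose_mul [Fintype l]
    {Hh : Matrix n n ℝ} {Dh : Matrix n l ℝ} {D : Matrix m n ℝ} {H : Matrix m l ℝ}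
    (hSBP : Hh * Dh = -(Dᵀ * H)) (p : n → ℝ) (u : l → ℝ) :
    p ⬝ᵥ Hh *ᵥ (Dh *ᵥ u) = -((D *ᵥ p) ⬝ᵥ H *ᵥ u) := by
  rw [mulVec_mulVec, hSBP, neg_mulVec, dotProduct_neg, ← mulVec_mulVec, dotProduct_mulVec,
    vecMul_transpose]

theorem sumElim_dotProduct_fromBlocks_mulVec_sumElim {A : Matrix m m ℝ} {B : Matrix n n ℝ}
    (a x : m → ℝ) (b y : n → ℝ) :
    Sum.elim a b ⬝ᵥ fromBlocks A 0 0 B *ᵥ Sum.elim x y = a ⬝ᵥ A *ᵥ x + b ⬝ᵥ B *ᵥ y := by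
  simp [fromBlocks_mulVec, sumElim_dotProduct_sumElim]

end Matrix

theorem HasDerivAt.dotProduct_mulVec {m n : Type*} [Fintype m] [Fintype n] (A : Matrix m n ℝ)
    {x : ℝ → m → ℝ} {y : ℝ → n → ℝ} {x' : m → ℝ} {y' : n → ℝ} {t : ℝ}
    (hx : HasDerivAt x x' t) (hy : HasDerivAt y y' t) :
    HasDerivAt (fun s => x s ⬝ᵥ A *ᵥ y s) (x' ⬝ᵥ A *ᵥ y t + x t ⬝ᵥ A *ᵥ y') t := by
  have hAy : HasDerivAt (fun s => A *ᵥ y s) (A *ᵥ y') t :=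
    A.mulVecLin.toContinuousLinearMap.hasFDerivAt.comp_hasDerivAt t hy
  simp only [dotProduct, ← Finset.sum_add_distrib]
  exact HasDerivAt.fun_sum fun i _ => (hasDerivAt_pi.mp hx i).mul (hasDerivAt_pi.mp hAy i)

theorem HasDerivAt.half_dotProduct_mulVec_self {n : Type*} [Fintype n] {A : Matrix n n ℝ}
    {x : ℝ → n → ℝ} {x' : n → ℝ} {t : ℝ} (hx : HasDerivAt x x' t) (hA : A.IsSymm) :
    HasDerivAt (fun s => 1 / 2 * (x s ⬝ᵥ A *ᵥ x s)) (x t ⬝ᵥ A *ᵥ x') t := by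
  refine ((hx.dotProduct_mulVec A hx).const_mul (1 / 2 : ℝ)).congr_deriv ?_
  rw [hA.dotProduct_mulVec_comm x']
  ring

theorem stmt0_general
    (nh n1 n2 : ℕ)
    (Hh Jh : Matrix (Fin nh) (Fin nh) ℝ) (dHh dJh : Fin nh → ℝ)
    (hHh : Hh = diagonal dHh)
    (hJh : Jh = diagonal dJh)
    (H1 J1 : Matrix (Fin n1) (Fin n1) ℝ) (dH1 dJ1 : Fin n1 → ℝ)
    (hH1 : H1 = diagonal dH1)
    (hJ1 : J1 = diagonal dJ1)
    (H2 J2 : Matrix (Fin n2) (Fin n2) ℝ) (dH2 dJ2 : Fin n2 → ℝ)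
    (hH2 : H2 = diagonal dH2)
    (hJ2 : J2 = diagonal dJ2)
    (D1 : Matrix (Fin n1) (Fin nh) ℝ) (D2 : Matrix (Fin n2) (Fin nh) ℝ)
    (Dh1 : Matrix (Fin nh) (Fin n1) ℝ) (Dh2 : Matrix (Fin nh) (Fin n2) ℝ)
    (hSBP1 : Hh * Dh1 = -(D1ᵀ * H1)) (hSBP2 : Hh * Dh2 = -(D2ᵀ * H2))
    (H J : Matrix (Fin n1 ⊕ Fin n2) (Fin n1 ⊕ Fin n2) ℝ)
    (hH : H = fromBlocks H1 0 0 H2) (hJ : J = fromBlocks J1 0 0 J2)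
    (G : Matrix (Fin n1 ⊕ Fin n2) (Fin n1 ⊕ Fin n2) ℝ) (hG : IsUnit G)
    (hsym : (H * J * G⁻¹)ᵀ = H * J * G⁻¹)
    (p : ℝ → Fin nh → ℝ) (v1 : ℝ → Fin n1 → ℝ) (v2 : ℝ → Fin n2 → ℝ)
    (p' : ℝ → Fin nh → ℝ) (w' : ℝ → (Fin n1 ⊕ Fin n2) → ℝ)
    (hp : ∀ t, HasDerivAt p (p' t) t)
    (hw : ∀ t, HasDerivAt (fun s => Sum.elim (v1 s) (v2 s)) (w' t) t)
    (hode_p : ∀ t, Jh *ᵥ p' t = -(Dh1 *ᵥ (J1 *ᵥ v1 t) + Dh2 *ᵥ (J2 *ᵥ v2 t)))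
    (hode_v : ∀ t, w' t = -(G *ᵥ Sum.elim (D1 *ᵥ p t) (D2 *ᵥ p t)))
    (E : ℝ → ℝ)
    (hE : ∀ t, E t = (1/2) * (p t ⬝ᵥ (Hh * Jh) *ᵥ p t)
        + (1/2) * (Sum.elim (v1 t) (v2 t) ⬝ᵥ (H * J * G⁻¹) *ᵥ Sum.elim (v1 t) (v2 t))) :
    ∀ t, HasDerivAt E 0 t := by
  intro t
  have hA : (Hh * Jh).IsSymm := by
    rw [hHh, hJh, diagonal_mul_diagonal]
    exact isSymm_diagonal _
  set w := Sum.elim (v1 t) (v2 t)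
  set u := Sum.elim (D1 *ᵥ p t) (D2 *ᵥ p t)
  have hHJ : H * J = fromBlocks (H1 * J1) 0 0 (H2 * J2) := by simp [hH, hJ, fromBlocks_multiply]
  have hHJ_symm : (H * J).IsSymm := by
    simp only [hH, hJ, hH1, hJ1, hH2, hJ2, fromBlocks_diagonal, diagonal_mul_diagonal,
      isSymm_diagonal]
  have hp_rate : p t ⬝ᵥ (Hh * Jh) *ᵥ p' t = u ⬝ᵥ (H * J) *ᵥ w := by
    rw [← mulVec_mulVec, hode_p, mulVec_neg, mulVec_add, dotProduct_neg, dotProduct_add,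
      dotProduct_mulVec_mulVec_of_mul_eq_neg_transpose_mul hSBP1,
      dotProduct_mulVec_mulVec_of_mul_eq_neg_transpose_mul hSBP2, hHJ,
      sumElim_dotProduct_fromBlocks_mulVec_sumElim, ← mulVec_mulVec, ← mulVec_mulVec]
    ring
  have hv_rate : w ⬝ᵥ (H * J * G⁻¹) *ᵥ w' t = -(u ⬝ᵥ (H * J) *ᵥ w) := by
    rw [hode_v, mulVec_neg, mulVec_mulVec,
      nonsing_inv_mul_cancel_right _ _ ((isUnit_iff_isUnit_det G).mp hG), dotProduct_neg,
      hHJ_symm.dotProduct_mulVec_comm]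
  have hE' := ((hp t).half_dotProduct_mulVec_self hA).fun_add
    ((hw t).half_dotProduct_mulVec_self hsym)
  rwa [hp_rate, hv_rate, add_neg_cancel, ← funext hE] at hE'

/-- Semi-discrete energy conservation on a periodic grid (Lemma 1, matrix form). -/
theorem stmt0
    (nh n1 n2 : ℕ) (hnh : 0 < nh) (hn1 : 0 < n1) (hn2 : 0 < n2)
    (Hh Jh : Matrix (Fin nh) (Fin nh) ℝ) (dHh dJh : Fin nh → ℝ)
    (hHh : Hh = diagonal dHh) (hdHh : ∀ i, 0 < dHh i)
    (hJh : Jh = diagonal dJh) (hdJh : ∀ i, 0 < dJh i)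
    (H1 J1 : Matrix (Fin n1) (Fin n1) ℝ) (dH1 dJ1 : Fin n1 → ℝ)
    (hH1 : H1 = diagonal dH1) (hdH1 : ∀ i, 0 < dH1 i)
    (hJ1 : J1 = diagonal dJ1) (hdJ1 : ∀ i, 0 < dJ1 i)
    (H2 J2 : Matrix (Fin n2) (Fin n2) ℝ) (dH2 dJ2 : Fin n2 → ℝ)
    (hH2 : H2 = diagonal dH2) (hdH2 : ∀ i, 0 < dH2 i)
    (hJ2 : J2 = diagonal dJ2) (hdJ2 : ∀ i, 0 < dJ2 i)
    (D1 : Matrix (Fin n1) (Fin nh) ℝ) (D2 : Matrix (Fin n2) (Fin nh) ℝ)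
    (Dh1 : Matrix (Fin nh) (Fin n1) ℝ) (Dh2 : Matrix (Fin nh) (Fin n2) ℝ)
    (hSBP1 : Hh * Dh1 = -(D1ᵀ * H1)) (hSBP2 : Hh * Dh2 = -(D2ᵀ * H2))
    (H J : Matrix (Fin n1 ⊕ Fin n2) (Fin n1 ⊕ Fin n2) ℝ)
    (hH : H = fromBlocks H1 0 0 H2) (hJ : J = fromBlocks J1 0 0 J2)
    (G : Matrix (Fin n1 ⊕ Fin n2) (Fin n1 ⊕ Fin n2) ℝ) (hG : IsUnit G)
    (hsym : (H * J * G⁻¹)ᵀ = H * J * G⁻¹)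
    (p : ℝ → Fin nh → ℝ) (v1 : ℝ → Fin n1 → ℝ) (v2 : ℝ → Fin n2 → ℝ)
    (p' : ℝ → Fin nh → ℝ) (w' : ℝ → (Fin n1 ⊕ Fin n2) → ℝ)
    (hp : ∀ t, HasDerivAt p (p' t) t)
    (hw : ∀ t, HasDerivAt (fun s => Sum.elim (v1 s) (v2 s)) (w' t) t)
    (hode_p : ∀ t, Jh *ᵥ p' t = -(Dh1 *ᵥ (J1 *ᵥ v1 t) + Dh2 *ᵥ (J2 *ᵥ v2 t)))
    (hode_v : ∀ t, w' t = -(G *ᵥ Sum.elim (D1 *ᵥ p t) (D2 *ᵥ p t)))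
    (E : ℝ → ℝ)
    (hE : ∀ t, E t = (1/2) * (p t ⬝ᵥ (Hh * Jh) *ᵥ p t)
        + (1/2) * (Sum.elim (v1 t) (v2 t) ⬝ᵥ (H * J * G⁻¹) *ᵥ Sum.elim (v1 t) (v2 t))) :
    ∀ t, HasDerivAt E 0 t :=
  stmt0_general nh n1 n2 Hh Jh dHh dJh hHh hJh H1 J1 dH1 dJ1 hH1 hJ1 H2 J2 dH2 dJ2 hH2 hJ2 D1 D2 Dh1
    Dh2 hSBP1 hSBP2 H J hH hJ G hG hsym p v1 v2 p' w' hp hw hode_p hode_v E hE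
end

section
/- Energy rate identity for the semi-discrete scheme (intermediate step in the proof of Lemma 1). Let n̂, n₁, n₂ be positive integers. Let Ĥ, Ĵ be positive diagonal n̂×n̂ real matrices, H₁, J₁ positive diagonal n₁×n₁, H₂, J₂ positive diagonal n₂×n₂, and let D₁ ∈ ℝ^{n₁×n̂}, D₂ ∈ ℝ^{n₂×n̂}, D̂₁ ∈ ℝ^{n̂×n₁}, D̂₂ ∈ ℝ^{n̂×n₂} be arbitrary. Set H = blockdiag(H₁, H₂), J = blockdiag(J₁, J₂), and let G be an invertible (n₁+n₂)×(n₁+n₂) real matrix such that H·J·G⁻¹ is symmetric. Suppose p : ℝ → ℝ^{n̂}, v¹ : ℝ → ℝ^{n₁}, v² : ℝ → ℝ^{n₂} are differentiable and satisfy, for all t, Ĵ·p′(t) = −(D̂₁·J₁·v¹(t) + D̂₂·J₂·v²(t)) and (v¹, v²)′(t) = −G·(D₁·p(t), D₂·p(t)). Then for all t, the derivative of E(t) = ½·p(t)ᵀ·Ĥ·Ĵ·p(t) + ½·(v¹(t), v²(t))ᵀ·H·J·G⁻¹·(v¹(t), v²(t)) equals E′(t) = −p(t)ᵀ·(Ĥ·D̂₁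 + D₁ᵀ·H₁)·J₁·v¹(t) − p(t)ᵀ·(Ĥ·D̂₂ + D₂ᵀ·H₂)·J₂·v²(t). -/
/-!
Both quadratic forms in `E` have symmetric matrices (`Ĥ Ĵ` is diagonal, `H J G⁻¹` by assumption), so
`E' = p ⬝ Ĥ Ĵ p' + w ⬝ H J G⁻¹ w'` with `w = (v¹, v²)`. Substituting the equations of motion, `G⁻¹`
cancels against `G`, and because `Hₖ Jₖ` is symmetric, `vᵏ ⬝ Hₖ Jₖ Dₖ p = p ⬝ Dₖᵀ Hₖ Jₖ vᵏ`.
-/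

open Matrix

section MatrixAlgebra

variable {α m n : Type*} [Fintype n]

theorem transpose_diagonal_mul_diagonal [CommSemiring α] [DecidableEq n] (a b : n → α) :
    (diagonal a * diagonal b)ᵀ = diagonal a * diagonal b := by
  rw [diagonal_mul_diagonal, diagonal_transpose]

theorem dotProduct_mulVec_comm_of_transpose_eq [CommSemiring α] {M : Matrix n n α} (hM : Mᵀ = M)
    (x y : n → α) : x ⬝ᵥ M *ᵥ y = y ⬝ᵥ M *ᵥ x := by
  simpa only [hM] using dotProduct_transpose_mulVec M x y

theorem dotProduct_mulVec_mulVec_of_transpose_eq [CommSemiring α] [Fintype m] {S : Matrix m m α}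
    (hS : Sᵀ = S) (D : Matrix m n α) (v : m → α) (x : n → α) :
    v ⬝ᵥ S *ᵥ (D *ᵥ x) = x ⬝ᵥ Dᵀ *ᵥ (S *ᵥ v) := by
  rw [dotProduct_mulVec_comm_of_transpose_eq hS, dotProduct_comm, dotProduct_transpose_mulVec]

theorem mul_inv_mulVec_mulVec [CommRing α] [DecidableEq n] (M : Matrix m n α) {G : Matrix n n α}
    (hG : IsUnit G) (x : n → α) : (M * G⁻¹) *ᵥ (G *ᵥ x) = M *ᵥ x := by
  rw [mulVec_mulVec, nonsing_inv_mul_cancel_right (A := G) M ((isUnit_iff_isUnit_det G).mp hG)]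

theorem sumElim_dotProduct_fromBlocks_zero_mulVec_sumElim [CommSemiring α] [Fintype m]
    (A : Matrix m m α) (B : Matrix n n α) (x y : m → α) (x' y' : n → α) :
    Sum.elim x x' ⬝ᵥ fromBlocks A 0 0 B *ᵥ Sum.elim y y' = x ⬝ᵥ A *ᵥ y + x' ⬝ᵥ B *ᵥ y' := by
  rw [fromBlocks_mulVec]
  simp only [Sum.elim_comp_inl, Sum.elim_comp_inr, zero_mulVec, add_zero, zero_add,
    sumElim_dotProduct_sumElim]

end MatrixAlgebra

section Calculus

variable {n : Type*} [Fintype n] {f g : ℝ → n → ℝ} {f' g' : n → ℝ} {t : ℝ}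

theorem HasDerivAt.dotProduct (hf : HasDerivAt f f' t) (hg : HasDerivAt g g' t) :
    HasDerivAt (fun s => f s ⬝ᵥ g s) (f' ⬝ᵥ g t + f t ⬝ᵥ g') t := by
  have hsum := HasDerivAt.fun_sum (u := Finset.univ) fun i _ =>
    (hasDerivAt_pi.mp hf i).mul (hasDerivAt_pi.mp hg i)
  rw [Finset.sum_add_distrib] at hsum
  exact hsum

theorem HasDerivAt.mulVec {m : Type*} [Fintype m] (M : Matrix m n ℝ) (hf : HasDerivAt f f' t) :
    HasDerivAt (fun s => M *ᵥ f s) (M *ᵥ f') t :=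
  (Matrix.mulVecLin M).toContinuousLinearMap.hasFDerivAt.comp_hasDerivAt t hf

theorem HasDerivAt.half_dotProduct_mulVec_self_s1 {M : Matrix n n ℝ} (hM : Mᵀ = M)
    (hf : HasDerivAt f f' t) :
    HasDerivAt (fun s => 1 / 2 * (f s ⬝ᵥ M *ᵥ f s)) (f t ⬝ᵥ M *ᵥ f') t :=
  ((hf.dotProduct (hf.mulVec M)).const_mul (1 / 2 : ℝ)).congr_deriv <| by
    rw [dotProduct_mulVec_comm_of_transpose_eq hM f']
    ring

end Calculus

theorem stmt1_general
    (nh n1 n2 : ℕ)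
    (Hh Jh : Matrix (Fin nh) (Fin nh) ℝ) (dHh dJh : Fin nh → ℝ)
    (hHh : Hh = diagonal dHh)
    (hJh : Jh = diagonal dJh)
    (H1 J1 : Matrix (Fin n1) (Fin n1) ℝ) (dH1 dJ1 : Fin n1 → ℝ)
    (hH1 : H1 = diagonal dH1)
    (hJ1 : J1 = diagonal dJ1)
    (H2 J2 : Matrix (Fin n2) (Fin n2) ℝ) (dH2 dJ2 : Fin n2 → ℝ)
    (hH2 : H2 = diagonal dH2)
    (hJ2 : J2 = diagonal dJ2)
    (D1 : Matrix (Fin n1) (Fin nh) ℝ) (D2 : Matrix (Fin n2) (Fin nh) ℝ)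
    (Dh1 : Matrix (Fin nh) (Fin n1) ℝ) (Dh2 : Matrix (Fin nh) (Fin n2) ℝ)
    (H J : Matrix (Fin n1 ⊕ Fin n2) (Fin n1 ⊕ Fin n2) ℝ)
    (hH : H = fromBlocks H1 0 0 H2) (hJ : J = fromBlocks J1 0 0 J2)
    (G : Matrix (Fin n1 ⊕ Fin n2) (Fin n1 ⊕ Fin n2) ℝ) (hG : IsUnit G)
    (hsym : (H * J * G⁻¹)ᵀ = H * J * G⁻¹)
    (p : ℝ → Fin nh → ℝ) (v1 : ℝ → Fin n1 → ℝ) (v2 : ℝ → Fin n2 → ℝ)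
    (p' : ℝ → Fin nh → ℝ) (w' : ℝ → (Fin n1 ⊕ Fin n2) → ℝ)
    (hp : ∀ t, HasDerivAt p (p' t) t)
    (hw : ∀ t, HasDerivAt (fun s => Sum.elim (v1 s) (v2 s)) (w' t) t)
    (hode_p : ∀ t, Jh *ᵥ p' t = -(Dh1 *ᵥ (J1 *ᵥ v1 t) + Dh2 *ᵥ (J2 *ᵥ v2 t)))
    (hode_v : ∀ t, w' t = -(G *ᵥ Sum.elim (D1 *ᵥ p t) (D2 *ᵥ p t)))
    (E : ℝ → ℝ)
    (hE : ∀ t, E t = (1/2) * (p t ⬝ᵥ (Hh * Jh) *ᵥ p t)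
        + (1/2) * (Sum.elim (v1 t) (v2 t) ⬝ᵥ (H * J * G⁻¹) *ᵥ Sum.elim (v1 t) (v2 t))) :
    ∀ t, HasDerivAt E
      (-(p t ⬝ᵥ (Hh * Dh1 + D1ᵀ * H1) *ᵥ (J1 *ᵥ v1 t))
        - p t ⬝ᵥ (Hh * Dh2 + D2ᵀ * H2) *ᵥ (J2 *ᵥ v2 t)) t := by
  intro t
  have hHJh : (Hh * Jh)ᵀ = Hh * Jh := hHh ▸ hJh ▸ transpose_diagonal_mul_diagonal dHh dJh
  have hHJ1 : (H1 * J1)ᵀ = H1 * J1 := hH1 ▸ hJ1 ▸ transpose_diagonal_mul_diagonal dH1 dJ1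
  have hHJ2 : (H2 * J2)ᵀ = H2 * J2 := hH2 ▸ hJ2 ▸ transpose_diagonal_mul_diagonal dH2 dJ2
  have hHJ : H * J = fromBlocks (H1 * J1) 0 0 (H2 * J2) := by
    rw [hH, hJ, fromBlocks_multiply]
    simp only [Matrix.mul_zero, Matrix.zero_mul, add_zero, zero_add]
  have hrate_p : p t ⬝ᵥ (Hh * Jh) *ᵥ p' t
      = -(p t ⬝ᵥ (Hh * Dh1) *ᵥ (J1 *ᵥ v1 t)) - p t ⬝ᵥ (Hh * Dh2) *ᵥ (J2 *ᵥ v2 t) := by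
    simp only [← mulVec_mulVec, hode_p t, mulVec_neg, mulVec_add, dotProduct_neg, dotProduct_add]
    ring
  have hrate_v : Sum.elim (v1 t) (v2 t) ⬝ᵥ (H * J * G⁻¹) *ᵥ w' t
      = -(p t ⬝ᵥ (D1ᵀ * H1) *ᵥ (J1 *ᵥ v1 t)) - p t ⬝ᵥ (D2ᵀ * H2) *ᵥ (J2 *ᵥ v2 t) := by
    rw [hode_v t, mulVec_neg, mul_inv_mulVec_mulVec _ hG, hHJ, dotProduct_neg,
      sumElim_dotProduct_fromBlocks_zero_mulVec_sumElim,
      dotProduct_mulVec_mulVec_of_transpose_eq hHJ1, dotProduct_mulVec_mulVec_of_transpose_eq hHJ2]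
    simp only [← mulVec_mulVec]
    ring
  rw [show E = _ from funext hE]
  refine (((hp t).half_dotProduct_mulVec_self_s1 hHJh).add
    ((hw t).half_dotProduct_mulVec_self_s1 hsym)).congr_deriv ?_
  rw [hrate_p, hrate_v]
  simp only [add_mulVec, dotProduct_add]
  ring

/-- Energy rate identity for the semi-discrete scheme (intermediate step in Lemma 1). -/
theorem stmt1
    (nh n1 n2 : ℕ) (hnh : 0 < nh) (hn1 : 0 < n1) (hn2 : 0 < n2)
    (Hh Jh : Matrix (Fin nh) (Fin nh) ℝ) (dHh dJh : Fin nh → ℝ)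
    (hHh : Hh = diagonal dHh) (hdHh : ∀ i, 0 < dHh i)
    (hJh : Jh = diagonal dJh) (hdJh : ∀ i, 0 < dJh i)
    (H1 J1 : Matrix (Fin n1) (Fin n1) ℝ) (dH1 dJ1 : Fin n1 → ℝ)
    (hH1 : H1 = diagonal dH1) (hdH1 : ∀ i, 0 < dH1 i)
    (hJ1 : J1 = diagonal dJ1) (hdJ1 : ∀ i, 0 < dJ1 i)
    (H2 J2 : Matrix (Fin n2) (Fin n2) ℝ) (dH2 dJ2 : Fin n2 → ℝ)
    (hH2 : H2 = diagonal dH2) (hdH2 : ∀ i, 0 < dH2 i)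
    (hJ2 : J2 = diagonal dJ2) (hdJ2 : ∀ i, 0 < dJ2 i)
    (D1 : Matrix (Fin n1) (Fin nh) ℝ) (D2 : Matrix (Fin n2) (Fin nh) ℝ)
    (Dh1 : Matrix (Fin nh) (Fin n1) ℝ) (Dh2 : Matrix (Fin nh) (Fin n2) ℝ)
    (H J : Matrix (Fin n1 ⊕ Fin n2) (Fin n1 ⊕ Fin n2) ℝ)
    (hH : H = fromBlocks H1 0 0 H2) (hJ : J = fromBlocks J1 0 0 J2)
    (G : Matrix (Fin n1 ⊕ Fin n2) (Fin n1 ⊕ Fin n2) ℝ) (hG : IsUnit G)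
    (hsym : (H * J * G⁻¹)ᵀ = H * J * G⁻¹)
    (p : ℝ → Fin nh → ℝ) (v1 : ℝ → Fin n1 → ℝ) (v2 : ℝ → Fin n2 → ℝ)
    (p' : ℝ → Fin nh → ℝ) (w' : ℝ → (Fin n1 ⊕ Fin n2) → ℝ)
    (hp : ∀ t, HasDerivAt p (p' t) t)
    (hw : ∀ t, HasDerivAt (fun s => Sum.elim (v1 s) (v2 s)) (w' t) t)
    (hode_p : ∀ t, Jh *ᵥ p' t = -(Dh1 *ᵥ (J1 *ᵥ v1 t) + Dh2 *ᵥ (J2 *ᵥ v2 t)))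
    (hode_v : ∀ t, w' t = -(G *ᵥ Sum.elim (D1 *ᵥ p t) (D2 *ᵥ p t)))
    (E : ℝ → ℝ)
    (hE : ∀ t, E t = (1/2) * (p t ⬝ᵥ (Hh * Jh) *ᵥ p t)
        + (1/2) * (Sum.elim (v1 t) (v2 t) ⬝ᵥ (H * J * G⁻¹) *ᵥ Sum.elim (v1 t) (v2 t))) :
    ∀ t, HasDerivAt E
      (-(p t ⬝ᵥ (Hh * Dh1 + D1ᵀ * H1) *ᵥ (J1 *ᵥ v1 t))
        - p t ⬝ᵥ (Hh * Dh2 + D2ᵀ * H2) *ᵥ (J2 *ᵥ v2 t)) t :=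
  stmt1_general nh n1 n2 Hh Jh dHh dJh hHh hJh H1 J1 dH1 dJ1 hH1 hJ1 H2 J2 dH2 dJ2 hH2 hJ2 D1 D2 Dh1
    Dh2 H J hH hJ G hG hsym p v1 v2 p' w' hp hw hode_p hode_v E hE
end

section
/- Unconditional positive definiteness of the discretized kinetic-energy matrix (Lemma 2, matrix form). Let n̂, n₁, n₂ be positive integers. Let Ĥ and Ĵ be positive diagonal n̂×n̂ real matrices, and let ĝ¹¹, ĝ¹², ĝ²² be diagonal n̂×n̂ real matrices such that for every index i the 2×2 matrix [[ĝ¹¹ᵢᵢ, ĝ¹²ᵢᵢ], [ĝ¹²ᵢᵢ, ĝ²²ᵢᵢ]] is positive definite. Let P_{c1} ∈ ℝ^{n̂×n₁} and P_{c2} ∈ ℝ^{n̂×n₂} be matrices whose null spaces are trivial (i.e., P_{c1}x = 0 implies x = 0 and P_{c2}y = 0 implies y = 0). Then the (n₁+n₂)×(n₁+n₂) block matrix with blocks [[P_{c1}ᵀ·Ĥ·Ĵ·ĝ¹¹·P_{c1}, P_{c1}ᵀ·Ĥ·Ĵ·ĝ¹²·P_{c2}], [P_{c2}ᵀ·Ĥ·Ĵ·ĝ¹²·P_{c1},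 P_{c2}ᵀ·Ĥ·Ĵ·ĝ²²·P_{c2}]] is positive definite. -/
/-!
The matrix is `Qᴴ K Q` with `Q = fromBlocks P_{c1} 0 0 P_{c2}`, which is injective, and `K` the
2 × 2 block matrix of the diagonal matrices `Ĥ Ĵ ĝ^{kl}`. The quadratic form of `K` splits over the
indices `i` into the 2 × 2 forms of `(Ĥ Ĵ)ᵢ [[ĝ¹¹, ĝ¹²], [ĝ¹², ĝ²²]]ᵢ`, each positive definite, so
`K` and hence `Qᴴ K Q` is positive definite.
-/

open Matrix

namespace Matrix

variable {ι m n m' n' R : Type*} [Fintype ι] [DecidableEq ι]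

section CommRing
variable [CommRing R] [StarRing R]

theorem star_dotProduct_fromBlocks_diagonal_mulVec (a b b' c : ι → R) (v : ι ⊕ ι → R) :
    star v ⬝ᵥ (fromBlocks (diagonal a) (diagonal b) (diagonal b') (diagonal c) *ᵥ v) =
      ∑ i, star ![v (.inl i), v (.inr i)] ⬝ᵥ
        (!![a i, b i; b' i, c i] *ᵥ ![v (.inl i), v (.inr i)]) := by
  simp only [fromBlocks_mulVec, dotProduct, Fintype.sum_sum_type, ← Finset.sum_add_distrib]
  refine Finset.sum_congr rfl fun i _ => ?_
  simp [diagonal_apply, mulVec, dotProduct, Fin.sum_univ_two]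

theorem PosDef.fromBlocks_diagonal [PartialOrder R] [IsOrderedAddMonoid R] {a b c : ι → R}
    (h : ∀ i, (!![a i, b i; star (b i), c i]).PosDef) :
    (fromBlocks (diagonal a) (diagonal b) (diagonal (star b)) (diagonal c)).PosDef := by
  refine posDef_iff_dotProduct_mulVec.2 ⟨?_, fun v hv => ?_⟩
  · refine .fromBlocks (isHermitian_diagonal_of_self_adjoint _ ?_) (by simp)
      (isHermitian_diagonal_of_self_adjoint _ ?_)
    · exact funext fun i => by simpa using (h i).isHermitian.apply 0 0
    · exact funext fun i => by simpa using (h i).isHermitian.apply 1 1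
  obtain ⟨i, hi⟩ : ∃ i, ![v (.inl i), v (.inr i)] ≠ 0 := by
    by_contra! hzero
    exact hv <| funext fun s =>
      s.casesOn (fun i => congrFun (hzero i) 0) (fun i => congrFun (hzero i) 1)
  rw [star_dotProduct_fromBlocks_diagonal_mulVec]
  exact Finset.sum_pos' (fun j _ => (h j).posSemidef.dotProduct_mulVec_nonneg _)
    ⟨i, Finset.mem_univ _, (h i).dotProduct_mulVec_pos hi⟩

end CommRing

variable [Semiring R]

theorem fromBlocks_conjTranspose_mul_mul_fromBlocks [Fintype m] [Fintype n] [StarRing R]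
    (P : Matrix m m' R) (Q : Matrix n n' R) (A : Matrix m m R) (B : Matrix m n R)
    (C : Matrix n m R) (D : Matrix n n R) :
    (fromBlocks P 0 0 Q)ᴴ * fromBlocks A B C D * fromBlocks P 0 0 Q =
      fromBlocks (Pᴴ * A * P) (Pᴴ * B * Q) (Qᴴ * C * P) (Qᴴ * D * Q) := by
  simp [fromBlocks_conjTranspose, fromBlocks_multiply]

theorem injective_mulVec_fromBlocks [Fintype m'] [Fintype n']
    {P : Matrix m m' R} {Q : Matrix n n' R}
    (hP : Function.Injective P.mulVec) (hQ : Function.Injective Q.mulVec) :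
    Function.Injective (fromBlocks P 0 0 Q).mulVec := by
  intro v w h
  simp only [fromBlocks_mulVec, zero_mulVec, add_zero, zero_add] at h
  rw [← Sum.elim_comp_inl_inr v, ← Sum.elim_comp_inl_inr w, hP (congrArg (· ∘ Sum.inl) h),
    hQ (congrArg (· ∘ Sum.inr) h)]

end Matrix

theorem stmt2_general
    (nh n1 n2 : ℕ)
    (Hh Jh G11 G12 G22 : Matrix (Fin nh) (Fin nh) ℝ)
    (dHh dJh g11 g12 g22 : Fin nh → ℝ)
    (hHh : Hh = diagonal dHh) (hdHh : ∀ i, 0 < dHh i)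
    (hJh : Jh = diagonal dJh) (hdJh : ∀ i, 0 < dJh i)
    (hG11 : G11 = diagonal g11) (hG12 : G12 = diagonal g12) (hG22 : G22 = diagonal g22)
    (hg : ∀ i, (!![g11 i, g12 i; g12 i, g22 i] : Matrix (Fin 2) (Fin 2) ℝ).PosDef)
    (Pc1 : Matrix (Fin nh) (Fin n1) ℝ) (Pc2 : Matrix (Fin nh) (Fin n2) ℝ)
    (hPc1 : ∀ x, Pc1 *ᵥ x = 0 → x = 0) (hPc2 : ∀ y, Pc2 *ᵥ y = 0 → y = 0) :
    (fromBlocks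
      (Pc1ᵀ * (Hh * Jh * G11) * Pc1) (Pc1ᵀ * (Hh * Jh * G12) * Pc2)
      (Pc2ᵀ * (Hh * Jh * G12) * Pc1) (Pc2ᵀ * (Hh * Jh * G22) * Pc2)).PosDef := by
  subst hHh hJh hG11 hG12 hG22
  have hK : (fromBlocks (diagonal (dHh * dJh * g11)) (diagonal (dHh * dJh * g12))
      (diagonal (star (dHh * dJh * g12))) (diagonal (dHh * dJh * g22))).PosDef := by
    refine PosDef.fromBlocks_diagonal fun i => ?_
    have hscale : !![(dHh * dJh * g11) i, (dHh * dJh * g12) i;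
        star ((dHh * dJh * g12) i), (dHh * dJh * g22) i] =
        (dHh i * dJh i) • !![g11 i, g12 i; g12 i, g22 i] := by
      simp [mul_assoc]
    rw [hscale]
    exact (hg i).smul (mul_pos (hdHh i) (hdJh i))
  have hP := injective_mulVec_fromBlocks ((injective_iff_map_eq_zero Pc1.mulVecLin).2 hPc1)
    ((injective_iff_map_eq_zero Pc2.mulVecLin).2 hPc2)
  convert hK.conjTranspose_mul_mul_same hP using 1
  rw [fromBlocks_conjTranspose_mul_mul_fromBlocks]
  simp [diagonal_mul_diagonal, conjTranspose_eq_transpose_of_trivial, Pi.mul_def]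

/-- Unconditional positive definiteness of the discretized kinetic-energy matrix
(Lemma 2, matrix form). -/
theorem stmt2
    (nh n1 n2 : ℕ) (hnh : 0 < nh) (hn1 : 0 < n1) (hn2 : 0 < n2)
    (Hh Jh G11 G12 G22 : Matrix (Fin nh) (Fin nh) ℝ)
    (dHh dJh g11 g12 g22 : Fin nh → ℝ)
    (hHh : Hh = diagonal dHh) (hdHh : ∀ i, 0 < dHh i)
    (hJh : Jh = diagonal dJh) (hdJh : ∀ i, 0 < dJh i)
    (hG11 : G11 = diagonal g11) (hG12 : G12 = diagonal g12) (hG22 : G22 = diagonal g22)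
    (hg : ∀ i, (!![g11 i, g12 i; g12 i, g22 i] : Matrix (Fin 2) (Fin 2) ℝ).PosDef)
    (Pc1 : Matrix (Fin nh) (Fin n1) ℝ) (Pc2 : Matrix (Fin nh) (Fin n2) ℝ)
    (hPc1 : ∀ x, Pc1 *ᵥ x = 0 → x = 0) (hPc2 : ∀ y, Pc2 *ᵥ y = 0 → y = 0) :
    (fromBlocks
      (Pc1ᵀ * (Hh * Jh * G11) * Pc1) (Pc1ᵀ * (Hh * Jh * G12) * Pc2)
      (Pc2ᵀ * (Hh * Jh * G12) * Pc1) (Pc2ᵀ * (Hh * Jh * G22) * Pc2)).PosDef :=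
  stmt2_general nh n1 n2 Hh Jh G11 G12 G22 dHh dJh g11 g12 g22 hHh hdHh hJh hdJh hG11 hG12 hG22 hg
    Pc1 Pc2 hPc1 hPc2
end

section
/- Symmetry of the modified metric-tensor discretization (claim in Section 5.2). Let n̂, n₁, n₂ be positive integers. Let Ĥ, Ĵ be positive diagonal n̂×n̂ real matrices, ĝ¹² a diagonal n̂×n̂ real matrix, H₁, J₁ positive diagonal n₁×n₁ real matrices, H₂, J₂ positive diagonal n₂×n₂ real matrices, and g¹¹₁ (n₁×n₁), g²²₂ (n₂×n₂) diagonal real matrices. Let P_{1c} ∈ ℝ^{n₁×n̂}, P_{c1} ∈ ℝ^{n̂×n₁}, P_{2c} ∈ ℝ^{n₂×n̂}, P_{c2} ∈ ℝ^{n̂×n₂} satisfy the SBP interpolation relations H₁·P_{1c} = P_{c1}ᵀ·Ĥ and H₂·P_{2c} = P_{c2}ᵀ·Ĥ. Define G̃ as the block matrix with blocks [[g¹¹₁, J₁⁻¹·P_{1c}·Ĵ·ĝ¹²·P_{c2}], [J₂⁻¹·P_{2c}·Ĵ·ĝ¹²·P_{c1}, g²²₂]], and set H = blockdiag(H₁,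 H₂), J = blockdiag(J₁, J₂). Then H·J·G̃ is symmetric, i.e., H·J·G̃ = (H·J·G̃)ᵀ. -/
open Matrix

lemma diag_mul_inv_cancel {n : ℕ} (d : Fin n → ℝ) (hd : ∀ i, 0 < d i) :
    diagonal d * (diagonal d)⁻¹ = 1 := by
  apply Matrix.mul_nonsing_inv
  rw [Matrix.det_diagonal]
  exact isUnit_iff_ne_zero.2 (ne_of_gt (Finset.prod_pos fun i _ => hd i))

/-- Symmetry of the modified metric-tensor discretization (claim in Section 5.2). -/
theorem stmt5
    (nh n1 n2 : ℕ) (hnh : 0 < nh) (hn1 : 0 < n1) (hn2 : 0 < n2)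
    (Hh Jh G12h : Matrix (Fin nh) (Fin nh) ℝ) (dHh dJh g12 : Fin nh → ℝ)
    (hHh : Hh = diagonal dHh) (hdHh : ∀ i, 0 < dHh i)
    (hJh : Jh = diagonal dJh) (hdJh : ∀ i, 0 < dJh i)
    (hG12h : G12h = diagonal g12)
    (H1 J1 G11 : Matrix (Fin n1) (Fin n1) ℝ) (dH1 dJ1 g11 : Fin n1 → ℝ)
    (hH1 : H1 = diagonal dH1) (hdH1 : ∀ i, 0 < dH1 i)
    (hJ1 : J1 = diagonal dJ1) (hdJ1 : ∀ i, 0 < dJ1 i)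
    (hG11 : G11 = diagonal g11)
    (H2 J2 G22 : Matrix (Fin n2) (Fin n2) ℝ) (dH2 dJ2 g22 : Fin n2 → ℝ)
    (hH2 : H2 = diagonal dH2) (hdH2 : ∀ i, 0 < dH2 i)
    (hJ2 : J2 = diagonal dJ2) (hdJ2 : ∀ i, 0 < dJ2 i)
    (hG22 : G22 = diagonal g22)
    (P1c : Matrix (Fin n1) (Fin nh) ℝ) (Pc1 : Matrix (Fin nh) (Fin n1) ℝ)
    (P2c : Matrix (Fin n2) (Fin nh) ℝ) (Pc2 : Matrix (Fin nh) (Fin n2) ℝ)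
    (hSBP1 : H1 * P1c = Pc1ᵀ * Hh) (hSBP2 : H2 * P2c = Pc2ᵀ * Hh)
    (Gt : Matrix (Fin n1 ⊕ Fin n2) (Fin n1 ⊕ Fin n2) ℝ)
    (hGt : Gt = fromBlocks G11 (J1⁻¹ * P1c * Jh * G12h * Pc2)
                           (J2⁻¹ * P2c * Jh * G12h * Pc1) G22)
    (H J : Matrix (Fin n1 ⊕ Fin n2) (Fin n1 ⊕ Fin n2) ℝ)
    (hH : H = fromBlocks H1 0 0 H2) (hJ : J = fromBlocks J1 0 0 J2) :
    H * J * Gt = (H * J * Gt)ᵀ := by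
  have hJ1inv : J1 * J1⁻¹ = 1 := by rw [hJ1]; exact diag_mul_inv_cancel dJ1 hdJ1
  have hJ2inv : J2 * J2⁻¹ = 1 := by rw [hJ2]; exact diag_mul_inv_cancel dJ2 hdJ2
  subst hGt hH hJ
  rw [Matrix.fromBlocks_multiply, Matrix.fromBlocks_multiply,
      Matrix.fromBlocks_transpose]
  have e1 : H1 * J1 * (J1⁻¹ * P1c * Jh * G12h * Pc2) = H1 * P1c * Jh * G12h * Pc2 := by
    calc H1 * J1 * (J1⁻¹ * P1c * Jh * G12h * Pc2)
        = H1 * (J1 * J1⁻¹) * (P1c * Jh * G12h * Pc2) := by simp only [Matrix.mul_assoc]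
      _ = H1 * P1c * Jh * G12h * Pc2 := by rw [hJ1inv, mul_one]; simp only [Matrix.mul_assoc]
  have e2 : H2 * J2 * (J2⁻¹ * P2c * Jh * G12h * Pc1) = H2 * P2c * Jh * G12h * Pc1 := by
    calc H2 * J2 * (J2⁻¹ * P2c * Jh * G12h * Pc1)
        = H2 * (J2 * J2⁻¹) * (P2c * Jh * G12h * Pc1) := by simp only [Matrix.mul_assoc]
      _ = H2 * P2c * Jh * G12h * Pc1 := by rw [hJ2inv, mul_one]; simp only [Matrix.mul_assoc]
  have comm : Hh * (Jh * G12h) = G12h * Jh * Hh := by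
    subst hHh hJh hG12h
    simp only [diagonal_mul_diagonal]
    ext i j
    rcases eq_or_ne i j with h | h
    · subst h; simp [Matrix.diagonal_apply_eq]; ring
    · simp [Matrix.diagonal_apply_ne _ h]
  have key : H1 * P1c * Jh * G12h * Pc2 = (H2 * P2c * Jh * G12h * Pc1)ᵀ := by
    rw [hSBP1, hSBP2]
    simp only [Matrix.transpose_mul, Matrix.transpose_transpose]
    simp only [← Matrix.mul_assoc]
    have hHhT : Hhᵀ = Hh := by rw [hHh]; exact Matrix.diagonal_transpose dHh
    have hJhT : Jhᵀ = Jh := by rw [hJh]; exact Matrix.diagonal_transpose dJh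
    have hGT : G12hᵀ = G12h := by rw [hG12h]; exact Matrix.diagonal_transpose g12
    rw [hHhT, hJhT, hGT]
    calc Pc1ᵀ * Hh * Jh * G12h * Pc2
        = Pc1ᵀ * (Hh * (Jh * G12h)) * Pc2 := by simp only [Matrix.mul_assoc]
      _ = Pc1ᵀ * (G12h * Jh * Hh) * Pc2 := by rw [comm]
      _ = Pc1ᵀ * G12h * Jh * Hh * Pc2 := by simp only [Matrix.mul_assoc]
  have d1 : H1 * J1 * G11 = (H1 * J1 * G11)ᵀ := by
    subst hH1 hJ1 hG11
    rw [diagonal_mul_diagonal, diagonal_mul_diagonal]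
    exact (Matrix.diagonal_transpose _).symm
  have d2 : H2 * J2 * G22 = (H2 * J2 * G22)ᵀ := by
    subst hH2 hJ2 hG22
    rw [diagonal_mul_diagonal, diagonal_mul_diagonal]
    exact (Matrix.diagonal_transpose _).symm
  simp only [Matrix.mul_zero, Matrix.zero_mul, add_zero, zero_add, Matrix.transpose_zero]
  rw [e1, e2, ← d1, ← d2, key, Matrix.transpose_transpose]
end

section
/- Conditional positive definiteness of the modified kinetic-energy matrix (composite stability criterion of Section 5.2). Let n̂, n₁, n₂ be positive integers. Let Ĥ, Ĵ be positive diagonal n̂×n̂ real matrices, ĝ¹¹, ĝ¹², ĝ²² diagonal n̂×n̂ real matrices, H₁, J₁ positive diagonal n₁×n₁ real matrices, H₂, J₂ positive diagonal n₂×n₂ real matrices, and g¹¹₁ (n₁×n₁), g²²₂ (n₂×n₂) diagonal real matrices. Let P_{c1} ∈ ℝ^{n̂×n₁} and P_{c2} ∈ ℝ^{n̂×n₂} have trivial null spaces. Let α > 0 and β > 0 be real numbers such that: (i) H₁·J₁·g¹¹₁ − α·P_{c1}ᵀ·Ĥ·Ĵ·ĝ¹¹·P_{c1} is positive semidefinite;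 (ii) H₂·J₂·g²²₂ − β·P_{c2}ᵀ·Ĥ·Ĵ·ĝ²²·P_{c2} is positive semidefinite; and (iii) for every index i the 2×2 matrix [[α·Ĥᵢᵢ·Ĵᵢᵢ·ĝ¹¹ᵢᵢ, Ĥᵢᵢ·Ĵᵢᵢ·ĝ¹²ᵢᵢ], [Ĥᵢᵢ·Ĵᵢᵢ·ĝ¹²ᵢᵢ, β·Ĥᵢᵢ·Ĵᵢᵢ·ĝ²²ᵢᵢ]] is positive definite. Then the (n₁+n₂)×(n₁+n₂) block matrix with blocks [[H₁·J₁·g¹¹₁, P_{c1}ᵀ·Ĥ·Ĵ·ĝ¹²·P_{c2}], [P_{c2}ᵀ·Ĥ·Ĵ·ĝ¹²·P_{c1}, H₂·J₂·g²²₂]] is positive definite. -/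
/-! Put `P = diag(Pc1, Pc2)` and let `K` be the block matrix of the diagonal weights
`α ĤĴĝ¹¹, ĤĴĝ¹², β ĤĴĝ²²`. The matrix splits as the block-diagonal matrix of (i) and (ii),
which is positive semidefinite, plus `Pᵀ K P`. After regrouping coordinates by index, `K` is
block diagonal with the positive definite 2×2 blocks of (iii), so `K` is positive definite, and
so is `Pᵀ K P` since `P` is injective. -/

open Matrix

namespace Matrix

variable {ι m n k l R : Type*} [Fintype m] [Fintype n]

theorem fromBlocks_zero_mulVec_injective [NonUnitalNonAssocSemiring R]
    {P : Matrix k m R} {Q : Matrix l n R}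
    (hP : Function.Injective P.mulVec) (hQ : Function.Injective Q.mulVec) :
    Function.Injective (fromBlocks P 0 0 Q).mulVec := by
  intro x y h
  simp only [fromBlocks_mulVec, zero_mulVec, add_zero, zero_add, Sum.elim_eq_iff] at h
  rw [← Sum.elim_comp_inl_inr x, ← Sum.elim_comp_inl_inr y, hP h.1, hQ h.2]

variable [Ring R] [StarRing R]

theorem dotProduct_fromBlocks_diagonal_mulVec [Fintype ι] [DecidableEq ι] (a b b' c : ι → R)
    (w : ι ⊕ ι → R) :
    star w ⬝ᵥ (fromBlocks (diagonal a) (diagonal b) (diagonal b') (diagonal c) *ᵥ w) =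
      ∑ i, star ![w (.inl i), w (.inr i)] ⬝ᵥ
        (!![a i, b i; b' i, c i] *ᵥ ![w (.inl i), w (.inr i)]) := by
  simp [fromBlocks_mulVec, dotProduct, Fin.sum_univ_two, mulVec_diagonal,
    Finset.sum_add_distrib, mul_add]

variable [PartialOrder R]

theorem PosSemidef.fromBlocks_zero [AddLeftMono R] {A : Matrix m m R} {D : Matrix n n R}
    (hA : A.PosSemidef) (hD : D.PosSemidef) : (fromBlocks A 0 0 D).PosSemidef := by
  refine .of_dotProduct_mulVec_nonneg (hA.isHermitian.fromBlocks (by simp) hD.isHermitian)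
    fun x ↦ ?_
  simp only [fromBlocks_mulVec, dotProduct_block, Sum.elim_comp_inl, Sum.elim_comp_inr,
    zero_mulVec, add_zero, zero_add]
  exact add_nonneg (hA.dotProduct_mulVec_nonneg (x ∘ .inl))
    (hD.dotProduct_mulVec_nonneg (x ∘ .inr))

theorem posDef_fromBlocks_diagonal [Fintype ι] [DecidableEq ι] [IsOrderedCancelAddMonoid R]
    {a b b' c : ι → R} (h : ∀ i, !![a i, b i; b' i, c i].PosDef) :
    (fromBlocks (diagonal a) (diagonal b) (diagonal b') (diagonal c)).PosDef := by
  have hH : ∀ i, !![a i, b i; b' i, c i].IsHermitian := fun i ↦ (h i).isHermitian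
  refine .of_dotProduct_mulVec_pos (.fromBlocks ?_ ?_ ?_) fun w hw ↦ ?_
  · exact isHermitian_diagonal_iff.2 fun i ↦ by simpa [isSelfAdjoint_iff] using (hH i).apply 0 0
  · rw [diagonal_conjTranspose]
    exact congrArg diagonal (funext fun i ↦ by simpa using (hH i).apply 1 0)
  · exact isHermitian_diagonal_iff.2 fun i ↦ by simpa [isSelfAdjoint_iff] using (hH i).apply 1 1
  obtain ⟨i, hi⟩ : ∃ i, ![w (.inl i), w (.inr i)] ≠ 0 := by
    by_contra! h0
    refine hw (funext fun j ↦ ?_)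
    rcases j with j | j
    · simpa using congrFun (h0 j) 0
    · simpa using congrFun (h0 j) 1
  rw [dotProduct_fromBlocks_diagonal_mulVec]
  refine Finset.sum_pos' (fun j _ ↦ ?_) ⟨i, Finset.mem_univ i, (h i).dotProduct_mulVec_pos hi⟩
  exact (h j).posSemidef.dotProduct_mulVec_nonneg _

theorem posDef_fromBlocks_of_posSemidef_sub [Fintype k] [Fintype l] [AddLeftMono R]
    {A : Matrix m m R} {B : Matrix n n R} {P : Matrix k m R} {Q : Matrix l n R}
    {K₁₁ : Matrix k k R} {K₁₂ : Matrix k l R} {K₂₁ : Matrix l k R} {K₂₂ : Matrix l l R}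
    (hK : (fromBlocks K₁₁ K₁₂ K₂₁ K₂₂).PosDef)
    (hP : Function.Injective P.mulVec) (hQ : Function.Injective Q.mulVec)
    (hA : (A - Pᴴ * K₁₁ * P).PosSemidef) (hB : (B - Qᴴ * K₂₂ * Q).PosSemidef) :
    (fromBlocks A (Pᴴ * K₁₂ * Q) (Qᴴ * K₂₁ * P) B).PosDef := by
  have hsplit : fromBlocks A (Pᴴ * K₁₂ * Q) (Qᴴ * K₂₁ * P) B =
      fromBlocks (A - Pᴴ * K₁₁ * P) 0 0 (B - Qᴴ * K₂₂ * Q) +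
        (fromBlocks P 0 0 Q)ᴴ * fromBlocks K₁₁ K₁₂ K₂₁ K₂₂ * fromBlocks P 0 0 Q := by
    simp [fromBlocks_conjTranspose, fromBlocks_multiply, fromBlocks_add]
  rw [hsplit]
  exact PosDef.posSemidef_add (hA.fromBlocks_zero hB)
    (hK.conjTranspose_mul_mul_same (fromBlocks_zero_mulVec_injective hP hQ))

end Matrix

theorem stmt8_general
    (nh n1 n2 : ℕ)
    (Hh Jh G11h G12h G22h : Matrix (Fin nh) (Fin nh) ℝ)
    (dHh dJh g11 g12 g22 : Fin nh → ℝ)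
    (hHh : Hh = diagonal dHh)
    (hJh : Jh = diagonal dJh)
    (hG11h : G11h = diagonal g11) (hG12h : G12h = diagonal g12) (hG22h : G22h = diagonal g22)
    (H1 J1 G11 : Matrix (Fin n1) (Fin n1) ℝ)
    (H2 J2 G22 : Matrix (Fin n2) (Fin n2) ℝ)
    (Pc1 : Matrix (Fin nh) (Fin n1) ℝ) (Pc2 : Matrix (Fin nh) (Fin n2) ℝ)
    (hPc1 : ∀ x, Pc1 *ᵥ x = 0 → x = 0) (hPc2 : ∀ y, Pc2 *ᵥ y = 0 → y = 0)
    (α β : ℝ)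
    (h1 : (H1 * J1 * G11 - α • (Pc1ᵀ * (Hh * Jh * G11h) * Pc1)).PosSemidef)
    (h2 : (H2 * J2 * G22 - β • (Pc2ᵀ * (Hh * Jh * G22h) * Pc2)).PosSemidef)
    (h3 : ∀ i, (!![α * (dHh i * dJh i * g11 i), dHh i * dJh i * g12 i;
                   dHh i * dJh i * g12 i, β * (dHh i * dJh i * g22 i)] :
        Matrix (Fin 2) (Fin 2) ℝ).PosDef) :
    (fromBlocks
      (H1 * J1 * G11) (Pc1ᵀ * (Hh * Jh * G12h) * Pc2)
      (Pc2ᵀ * (Hh * Jh * G12h) * Pc1) (H2 * J2 * G22)).PosDef := by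
  subst hHh hJh hG11h hG12h hG22h
  simp only [diagonal_mul_diagonal, ← conjTranspose_eq_transpose_of_trivial] at h1 h2 ⊢
  rw [← Matrix.smul_mul, ← Matrix.mul_smul, ← diagonal_smul] at h1 h2
  exact posDef_fromBlocks_of_posSemidef_sub (posDef_fromBlocks_diagonal h3)
    (LinearMap.ker_eq_bot.1 (ker_mulVecLin_eq_bot_iff.2 hPc1))
    (LinearMap.ker_eq_bot.1 (ker_mulVecLin_eq_bot_iff.2 hPc2)) h1 h2

/-- Conditional positive definiteness of the modified kinetic-energy matrix
(composite stability criterion of Section 5.2). -/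
theorem stmt8
    (nh n1 n2 : ℕ) (hnh : 0 < nh) (hn1 : 0 < n1) (hn2 : 0 < n2)
    (Hh Jh G11h G12h G22h : Matrix (Fin nh) (Fin nh) ℝ)
    (dHh dJh g11 g12 g22 : Fin nh → ℝ)
    (hHh : Hh = diagonal dHh) (hdHh : ∀ i, 0 < dHh i)
    (hJh : Jh = diagonal dJh) (hdJh : ∀ i, 0 < dJh i)
    (hG11h : G11h = diagonal g11) (hG12h : G12h = diagonal g12) (hG22h : G22h = diagonal g22)
    (H1 J1 G11 : Matrix (Fin n1) (Fin n1) ℝ) (dH1 dJ1 dG11 : Fin n1 → ℝ)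
    (hH1 : H1 = diagonal dH1) (hdH1 : ∀ i, 0 < dH1 i)
    (hJ1 : J1 = diagonal dJ1) (hdJ1 : ∀ i, 0 < dJ1 i)
    (hG11 : G11 = diagonal dG11)
    (H2 J2 G22 : Matrix (Fin n2) (Fin n2) ℝ) (dH2 dJ2 dG22 : Fin n2 → ℝ)
    (hH2 : H2 = diagonal dH2) (hdH2 : ∀ i, 0 < dH2 i)
    (hJ2 : J2 = diagonal dJ2) (hdJ2 : ∀ i, 0 < dJ2 i)
    (hG22 : G22 = diagonal dG22)
    (Pc1 : Matrix (Fin nh) (Fin n1) ℝ) (Pc2 : Matrix (Fin nh) (Fin n2) ℝ)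
    (hPc1 : ∀ x, Pc1 *ᵥ x = 0 → x = 0) (hPc2 : ∀ y, Pc2 *ᵥ y = 0 → y = 0)
    (α β : ℝ) (hα : 0 < α) (hβ : 0 < β)
    (h1 : (H1 * J1 * G11 - α • (Pc1ᵀ * (Hh * Jh * G11h) * Pc1)).PosSemidef)
    (h2 : (H2 * J2 * G22 - β • (Pc2ᵀ * (Hh * Jh * G22h) * Pc2)).PosSemidef)
    (h3 : ∀ i, (!![α * (dHh i * dJh i * g11 i), dHh i * dJh i * g12 i;
                   dHh i * dJh i * g12 i, β * (dHh i * dJh i * g22 i)] :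
        Matrix (Fin 2) (Fin 2) ℝ).PosDef) :
    (fromBlocks
      (H1 * J1 * G11) (Pc1ᵀ * (Hh * Jh * G12h) * Pc2)
      (Pc2ᵀ * (Hh * Jh * G12h) * Pc1) (H2 * J2 * G22)).PosDef :=
  stmt8_general nh n1 n2 Hh Jh G11h G12h G22h dHh dJh g11 g12 g22 hHh hJh hG11h hG12h hG22h H1 J1
    G11 H2 J2 G22 Pc1 Pc2 hPc1 hPc2 α β h1 h2 h3
end
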